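/- arXiv:1507.02834 — 10 statements merged into one kernel-verified Lean document; each statement's English description precedes it below -/
import Mathlib

section
/- For an odd prime p and integer r ≥ 1, the polynomial ∏_{k=0}^{p^r - 1} (1 + k·t) is congruent to (1 - t^{p-1})^{p^{r-1}} modulo p^r, meaning every coefficient of the difference is divisible by p^r. -/
open Polynomial

/-- `P n = ∏_{k=0}^{n-1} (1 + k·t)` in `ℤ[t]`. -/
noncomputable def P (n : ℕ) : Polynomial ℤ :=
  ∏ k ∈ Finset.range n, (1 + Polynomial.C (k : ℤ) * Polynomial.X)

/-- Unsigned Stirling number of the first kind: coefficient of `t^{n-k}` in `P n`. -/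
noncomputable def stirlingFirst (n k : ℕ) : ℤ := (P n).coeff (n - k)

section Lemmas

open Finset

variable {R : Type*} [CommRing R] {ι : Type*} [DecidableEq ι]

lemma dvd_prod_add_expand (s : Finset ι) (b e : ι → R) (d : R)
    (h : ∀ k ∈ s, d ∣ e k) :
    d ^ 2 ∣ (∏ k ∈ s, (b k + e k))
      - ((∏ k ∈ s, b k) + ∑ k ∈ s, e k * ∏ k' ∈ s.erase k, b k') := by
  induction s using Finset.induction_on with
  | empty => simp
  | insert i s hi ih =>
    have hei : d ∣ e i := h i (mem_insert_self ..)
    have ih' := ih fun k hk => h k (mem_insert_of_mem hk)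
    set T := ∏ k ∈ s, (b k + e k) with hT
    set Pb := ∏ k ∈ s, b k with hPb
    set S := ∑ k ∈ s, e k * ∏ k' ∈ s.erase k, b k' with hS
    have hdS : d ∣ S := Finset.dvd_sum fun k hk => (h k (mem_insert_of_mem hk)).mul_right _
    have hsum : ∑ k ∈ insert i s, e k * ∏ k' ∈ (insert i s).erase k, b k'
        = e i * Pb + b i * S := by
      rw [Finset.sum_insert hi, Finset.erase_insert hi]
      congr 1
      rw [Finset.mul_sum]
      refine Finset.sum_congr rfl fun k hk => ?_
      have hki : k ≠ i := by rintro rfl; exact hi hk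
      rw [Finset.erase_insert_of_ne hki.symm,
        Finset.prod_insert (fun hmem => hi (Finset.mem_of_mem_erase hmem))]
      ring
    rw [Finset.prod_insert hi, Finset.prod_insert hi, hsum]
    have key : (b i + e i) * T - (b i * Pb + (e i * Pb + b i * S))
        = b i * (T - (Pb + S)) + e i * (T - Pb) := by ring
    rw [key]
    refine dvd_add (ih'.mul_left _) ?_
    have h2 : d ∣ T - Pb := by
      have hd2 : d ∣ T - (Pb + S) := (dvd_pow_self d two_ne_zero).trans ih'
      have : T - Pb = (T - (Pb + S)) + S := by ring
      rw [this]; exact dvd_add hd2 hdS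
    rw [sq]
    exact mul_dvd_mul hei h2

lemma pow_lift (c a b : R) (n r : ℕ) (hr : 1 ≤ r)
    (h : c ^ r ∣ a - b) (hc : c ∣ (n : R)) : c ^ (r + 1) ∣ a ^ n - b ^ n := by
  have h1 : c ∣ a - b := (dvd_pow_self c (by omega : r ≠ 0)).trans h
  have hgeom : (∑ i ∈ Finset.range n, a ^ i * b ^ (n - 1 - i)) * (a - b) = a ^ n - b ^ n :=
    geom_sum₂_mul a b n
  have hS : c ∣ ∑ i ∈ Finset.range n, a ^ i * b ^ (n - 1 - i) := by
    have key : ∀ i ∈ Finset.range n, c ∣ a ^ i * b ^ (n - 1 - i) - b ^ (n - 1) := by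
      intro i hi
      rw [Finset.mem_range] at hi
      have hi' : i + (n - 1 - i) = n - 1 := by omega
      have : a ^ i * b ^ (n - 1 - i) - b ^ (n - 1) = (a ^ i - b ^ i) * b ^ (n - 1 - i) := by
        rw [sub_mul, ← pow_add, hi']
      rw [this]
      exact (h1.trans (sub_dvd_pow_sub_pow a b i)).mul_right _
    have hrw : (∑ i ∈ Finset.range n, a ^ i * b ^ (n - 1 - i))
        = (∑ i ∈ Finset.range n, (a ^ i * b ^ (n - 1 - i) - b ^ (n - 1))) + n * b ^ (n - 1) := by
      rw [Finset.sum_sub_distrib, Finset.sum_const, Finset.card_range, nsmul_eq_mul]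
      ring
    rw [hrw]
    exact dvd_add (Finset.dvd_sum key) (hc.mul_right _)
  have hmul := mul_dvd_mul hS h
  rw [hgeom] at hmul
  have hpow : c * c ^ r = c ^ (r + 1) := by rw [pow_succ]; ring
  rwa [hpow] at hmul

end Lemmas

lemma P_mul_eq (m a : ℕ) :
    P (a * m) = ∏ j ∈ Finset.range a, ∏ k ∈ Finset.range m,
      (1 + C ((j * m + k : ℕ) : ℤ) * X) := by
  induction a with
  | zero => simp [P]
  | succ a ih =>
    rw [Finset.prod_range_succ, ← ih]
    have h : (a + 1) * m = a * m + m := by ring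
    rw [P, h, Finset.prod_range_add, ← P]

lemma p_dvd_sum_range (p : ℕ) (hp : p.Prime) (hodd : Odd p) :
    (p : ℤ) ∣ ∑ j ∈ Finset.range p, (j : ℤ) := by
  have h2 : (∑ j ∈ Finset.range p, j) * 2 = p * (p - 1) := Finset.sum_range_id_mul_two p
  have hdvd : p ∣ (∑ j ∈ Finset.range p, j) * 2 := h2 ▸ Dvd.intro _ rfl
  have hcop : Nat.Coprime p 2 := by
    rw [Nat.coprime_primes hp Nat.prime_two]
    exact fun h => by subst h; exact (Nat.not_odd_iff_even.mpr even_two) hodd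
  have hnat : p ∣ ∑ j ∈ Finset.range p, j := hcop.dvd_of_dvd_mul_right hdvd
  have := Int.natCast_dvd_natCast.mpr hnat
  simpa using this

section Base

variable (p : ℕ) [Fact p.Prime]

lemma prod_X_sub_C_zmod :
    ∏ a : ZMod p, (X - C a) = X ^ p - X := by
  have hcard : Fintype.card (ZMod p) = p := ZMod.card p
  have hp1 : 1 < p := (Fact.out : p.Prime).one_lt
  have hroots : roots (X ^ p - X : (ZMod p)[X]) = Finset.univ.val := by
    have := FiniteField.roots_X_pow_card_sub_X (ZMod p)
    rwa [hcard] at this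
  have hdeg : (X ^ p - X : (ZMod p)[X]).natDegree = p :=
    FiniteField.X_pow_card_sub_X_natDegree_eq (ZMod p) hp1
  have hmonic : (X ^ p - X : (ZMod p)[X]).Monic := by
    have hd : degree (X : (ZMod p)[X]) < degree (X ^ p : (ZMod p)[X]) := by
      rw [degree_X, degree_X_pow]
      exact_mod_cast hp1
    exact (monic_X_pow p).sub_of_left hd
  have hcardroots : Multiset.card (X ^ p - X : (ZMod p)[X]).roots
      = (X ^ p - X : (ZMod p)[X]).natDegree := by
    rw [hroots, hdeg, ← Finset.card_def, Finset.card_univ, hcard]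
  have := prod_multiset_X_sub_C_of_monic_of_roots_card_eq hmonic hcardroots
  rw [hroots] at this
  rw [← this, Finset.prod_eq_multiset_prod]

lemma prod_X_sub_C_nonzero :
    ∏ a ∈ (Finset.univ : Finset (ZMod p)).erase 0, (X - C a) = X ^ (p - 1) - 1 := by
  have hp1 : 1 < p := (Fact.out : p.Prime).one_lt
  have hsplit : (X : (ZMod p)[X]) * ∏ a ∈ (Finset.univ : Finset (ZMod p)).erase 0, (X - C a)
      = X ^ p - X := by
    rw [← prod_X_sub_C_zmod p, ← Finset.mul_prod_erase Finset.univ _ (Finset.mem_univ (0 : ZMod p))]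
    simp
  have hrhs : (X : (ZMod p)[X]) * (X ^ (p - 1) - 1) = X ^ p - X := by
    have : p - 1 + 1 = p := by omega
    rw [mul_sub, mul_one, ← pow_succ', this]
  exact mul_left_cancel₀ X_ne_zero (by rw [hsplit, hrhs])

lemma prod_nonzero_eq_neg_one (hodd : Odd p) :
    ∏ a ∈ (Finset.univ : Finset (ZMod p)).erase 0, a = -1 := by
  have hp1 : 1 < p := (Fact.out : p.Prime).one_lt
  have h := prod_X_sub_C_nonzero p
  have heval := congrArg (Polynomial.eval (0 : ZMod p)) h
  rw [eval_sub, eval_pow, eval_X, eval_one, eval_prod] at heval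
  simp only [eval_sub, eval_X, eval_C, zero_sub] at heval
  have hcard : ((Finset.univ : Finset (ZMod p)).erase 0).card = p - 1 := by
    rw [Finset.card_erase_of_mem (Finset.mem_univ _), Finset.card_univ, ZMod.card]
  have hneg : ∏ a ∈ (Finset.univ : Finset (ZMod p)).erase 0, (-a)
      = (-1) ^ (p - 1) * ∏ a ∈ (Finset.univ : Finset (ZMod p)).erase 0, a := by
    rw [Finset.prod_congr rfl (fun a _ => (neg_one_mul a).symm),
      Finset.prod_mul_distrib, Finset.prod_const, hcard]
  have heven : Even (p - 1) := Nat.Odd.sub_odd hodd odd_one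
  rw [hneg, heven.neg_one_pow, one_mul, zero_pow (by omega : p - 1 ≠ 0), zero_sub] at heval
  exact heval

lemma prod_one_add_CX (hodd : Odd p) :
    ∏ a : ZMod p, (1 + C a * X) = 1 - X ^ (p - 1) := by
  have hp1 : 1 < p := (Fact.out : p.Prime).one_lt
  rw [← Finset.mul_prod_erase Finset.univ _ (Finset.mem_univ (0 : ZMod p))]
  rw [map_zero, zero_mul, add_zero, one_mul]
  have hfac : ∀ a ∈ (Finset.univ : Finset (ZMod p)).erase 0,
      1 + C a * X = C a * (X + C a⁻¹) := by
    intro a ha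
    have ha0 : a ≠ 0 := Finset.ne_of_mem_erase ha
    rw [mul_add, ← map_mul, mul_inv_cancel₀ ha0, map_one]
    ring
  rw [Finset.prod_congr rfl hfac, Finset.prod_mul_distrib, ← map_prod,
    prod_nonzero_eq_neg_one p hodd]
  have hinv : ∏ a ∈ (Finset.univ : Finset (ZMod p)).erase 0, (X + C a⁻¹)
      = ∏ a ∈ (Finset.univ : Finset (ZMod p)).erase 0, (X + C a) := by
    refine Finset.prod_nbij' (fun a => a⁻¹) (fun a => a⁻¹) ?_ ?_ ?_ ?_ ?_
    · intro a ha
      exact Finset.mem_erase.mpr ⟨inv_ne_zero (Finset.ne_of_mem_erase ha), Finset.mem_univ _⟩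
    · intro a ha
      exact Finset.mem_erase.mpr ⟨inv_ne_zero (Finset.ne_of_mem_erase ha), Finset.mem_univ _⟩
    · intro a _; exact inv_inv a
    · intro a _; exact inv_inv a
    · intro a _; rfl
  have hneg : ∏ a ∈ (Finset.univ : Finset (ZMod p)).erase 0, (X + C a)
      = ∏ a ∈ (Finset.univ : Finset (ZMod p)).erase 0, (X - C a) := by
    refine Finset.prod_nbij' (fun a => -a) (fun a => -a) ?_ ?_ ?_ ?_ ?_
    · intro a ha
      exact Finset.mem_erase.mpr ⟨neg_ne_zero.mpr (Finset.ne_of_mem_erase ha), Finset.mem_univ _⟩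
    · intro a ha
      exact Finset.mem_erase.mpr ⟨neg_ne_zero.mpr (Finset.ne_of_mem_erase ha), Finset.mem_univ _⟩
    · intro a _; exact neg_neg a
    · intro a _; exact neg_neg a
    · intro a _; rw [map_neg, sub_neg_eq_add]
  rw [hinv, hneg, prod_X_sub_C_nonzero p, map_neg, map_one]
  ring

lemma map_P_p (hodd : Odd p) :
    Polynomial.map (Int.castRingHom (ZMod p)) (P p) = 1 - X ^ (p - 1) := by
  rw [P, Polynomial.map_prod]
  have hcast : ∀ k ∈ Finset.range p,
      Polynomial.map (Int.castRingHom (ZMod p)) (1 + C (k : ℤ) * X)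
        = 1 + C ((k : ℕ) : ZMod p) * X := by
    intro k _
    rw [Polynomial.map_add, Polynomial.map_one, Polynomial.map_mul, map_C, map_X]
    norm_num
  rw [Finset.prod_congr rfl hcast, ← prod_one_add_CX p hodd]
  refine Finset.prod_nbij (fun k => (k : ZMod p)) (fun k _ => Finset.mem_univ _) ?_ ?_
    (fun k _ => rfl)
  · intro k1 h1 k2 h2 heq
    rw [Finset.mem_coe, Finset.mem_range] at h1 h2
    have := congrArg ZMod.val heq
    rwa [ZMod.val_cast_of_lt h1, ZMod.val_cast_of_lt h2] at this
  · intro a _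
    refine ⟨a.val, ?_, ?_⟩
    · simp [Finset.mem_range, ZMod.val_lt]
    · simp [ZMod.natCast_val, ZMod.cast_id]

end Base

lemma C_dvd_iff_map (n : ℕ) [NeZero n] (f : Polynomial ℤ) :
    (C (n : ℤ)) ∣ f ↔ f.map (Int.castRingHom (ZMod n)) = 0 := by
  rw [Polynomial.C_dvd_iff_dvd_coeff, Polynomial.ext_iff]
  simp [Polynomial.coeff_map, ZMod.intCast_zmod_eq_zero_iff_dvd]

lemma step (p : ℕ) (hp : p.Prime) (hodd : Odd p) (r : ℕ) (hr : 1 ≤ r) :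
    (C (p : ℤ)) ^ (r + 1) ∣ P (p ^ (r + 1)) - (P (p ^ r)) ^ p := by
  classical
  have hCm : (C ((p ^ r : ℕ) : ℤ) : Polynomial ℤ) = (C (p : ℤ)) ^ r := by
    push_cast
    rw [map_pow]
  have hcd : (C (p : ℤ)) ^ r ∣ C ((p ^ r : ℕ) : ℤ) * X := hCm ▸ dvd_mul_right _ _
  set m := p ^ r with hm
  set d := (C (p : ℤ)) ^ r with hd
  set c := C (m : ℤ) * X with hc
  set bf : ℕ → Polynomial ℤ := fun k => 1 + C (k : ℤ) * X with hbf
  set S := ∑ k ∈ Finset.range m, ∏ k' ∈ (Finset.range m).erase k, bf k' with hS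
  set Q := ∏ k ∈ Finset.range m, bf k with hQdef
  have hQP : P m = Q := rfl
  set f : ℕ → Polynomial ℤ := fun j => ∏ k ∈ Finset.range m, bf (j * m + k) with hf
  have hPP : P (p ^ (r + 1)) = ∏ j ∈ Finset.range p, f j := by
    rw [show p ^ (r + 1) = p * m from by rw [hm]; ring, P_mul_eq]
  have hd2 : (C (p : ℤ)) ^ (r + 1) ∣ d ^ 2 := by
    rw [hd, ← pow_mul]
    exact pow_dvd_pow _ (by omega)
  have hfj : ∀ j : ℕ, d ^ 2 ∣ f j - (Q + C (j : ℤ) * c * S) := by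
    intro j
    have h := dvd_prod_add_expand (Finset.range m) bf (fun _ => C (j : ℤ) * c) d
      (fun k _ => hcd.mul_left _)
    have h1 : ∏ k ∈ Finset.range m, (bf k + C (j : ℤ) * c) = f j := by
      rw [hf]
      refine Finset.prod_congr rfl fun k _ => ?_
      rw [hbf]
      simp only [Nat.cast_add, Nat.cast_mul, map_add, map_mul]
      ring
    have h2 : ∑ k ∈ Finset.range m, C (j : ℤ) * c * ∏ k' ∈ (Finset.range m).erase k, bf k'
        = C (j : ℤ) * c * S := by
      rw [hS, Finset.mul_sum]
    rwa [h1, h2] at h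
  have hQj : ∀ j : ℕ, d ∣ f j - Q := by
    intro j
    have h1 : d ∣ f j - (Q + C (j : ℤ) * c * S) := (dvd_pow_self d two_ne_zero).trans (hfj j)
    have h2 : d ∣ C (j : ℤ) * c * S := (hcd.mul_left _).mul_right _
    have heq : f j - Q = (f j - (Q + C (j : ℤ) * c * S)) + C (j : ℤ) * c * S := by ring
    rw [heq]; exact dvd_add h1 h2
  have houter := dvd_prod_add_expand (Finset.range p) (fun _ => Q) (fun j => f j - Q) d
    (fun j _ => hQj j)
  have houter1 : ∏ j ∈ Finset.range p, (Q + (f j - Q)) = ∏ j ∈ Finset.range p, f j :=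
    Finset.prod_congr rfl fun j _ => by ring
  have houter3 : ∀ j ∈ Finset.range p,
      (f j - Q) * ∏ _j' ∈ (Finset.range p).erase j, Q = (f j - Q) * Q ^ (p - 1) := by
    intro j hj
    rw [Finset.prod_const, Finset.card_erase_of_mem hj, Finset.card_range]
  rw [houter1, Finset.prod_const, Finset.card_range, Finset.sum_congr rfl houter3] at houter
  have hsum : (C (p : ℤ)) ^ (r + 1) ∣ ∑ j ∈ Finset.range p, (f j - Q) * Q ^ (p - 1) := by
    have hsplit : ∑ j ∈ Finset.range p, (f j - Q) * Q ^ (p - 1)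
        = (∑ j ∈ Finset.range p, (f j - (Q + C (j : ℤ) * c * S))) * Q ^ (p - 1)
          + C (∑ j ∈ Finset.range p, (j : ℤ)) * (c * S * Q ^ (p - 1)) := by
      calc ∑ j ∈ Finset.range p, (f j - Q) * Q ^ (p - 1)
          = ∑ j ∈ Finset.range p, ((f j - (Q + C (j : ℤ) * c * S)) * Q ^ (p - 1)
              + C (j : ℤ) * (c * S * Q ^ (p - 1))) :=
            Finset.sum_congr rfl fun j _ => by ring
        _ = (∑ j ∈ Finset.range p, (f j - (Q + C (j : ℤ) * c * S))) * Q ^ (p - 1)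
              + (∑ j ∈ Finset.range p, C (j : ℤ)) * (c * S * Q ^ (p - 1)) := by
            rw [Finset.sum_add_distrib, Finset.sum_mul, Finset.sum_mul]
        _ = _ := by rw [map_sum]
    rw [hsplit]
    refine dvd_add (Dvd.dvd.mul_right ?_ _) ?_
    · exact hd2.trans (Finset.dvd_sum fun j _ => hfj j)
    · have h1 : C (p : ℤ) ∣ C (∑ j ∈ Finset.range p, (j : ℤ)) :=
        map_dvd (Polynomial.C : ℤ →+* Polynomial ℤ) (p_dvd_sum_range p hp hodd)
      have h12 : (C (p : ℤ)) ^ (r + 1) ∣ C (∑ j ∈ Finset.range p, (j : ℤ)) * c := by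
        rw [pow_succ']
        exact mul_dvd_mul h1 hcd
      have heq : C (∑ j ∈ Finset.range p, (j : ℤ)) * (c * S * Q ^ (p - 1))
          = (C (∑ j ∈ Finset.range p, (j : ℤ)) * c) * (S * Q ^ (p - 1)) := by ring
      rw [heq]
      exact h12.mul_right _
  have hfinal : P (p ^ (r + 1)) - Q ^ p
      = (∏ j ∈ Finset.range p, f j
          - (Q ^ p + ∑ j ∈ Finset.range p, (f j - Q) * Q ^ (p - 1)))
        + ∑ j ∈ Finset.range p, (f j - Q) * Q ^ (p - 1) := by
    rw [hPP]; ring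
  rw [hQP, hfinal]
  exact dvd_add (hd2.trans houter) hsum

lemma main_cong (p : ℕ) (hp : p.Prime) (hodd : Odd p) :
    ∀ r, 1 ≤ r → (C (p : ℤ)) ^ r ∣ P (p ^ r) - (1 - X ^ (p - 1)) ^ p ^ (r - 1) := by
  intro r
  induction r with
  | zero => intro h; omega
  | succ r ih =>
    intro _
    rcases Nat.eq_zero_or_pos r with hr0 | hrpos
    · subst hr0
      haveI : Fact p.Prime := ⟨hp⟩
      simp only [zero_add, pow_one, Nat.sub_self, pow_zero]
      rw [C_dvd_iff_map, Polynomial.map_sub, map_P_p p hodd, Polynomial.map_sub,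
        Polynomial.map_one, Polynomial.map_pow, Polynomial.map_X, sub_self]
    · have hstep := step p hp hodd r hrpos
      have hlift := pow_lift (C (p : ℤ)) (P (p ^ r)) ((1 - X ^ (p - 1)) ^ p ^ (r - 1)) p r hrpos
        (ih hrpos) (by rw [Polynomial.C_eq_natCast])
      have hpow : (((1 - X ^ (p - 1) : Polynomial ℤ)) ^ p ^ (r - 1)) ^ p
          = (1 - X ^ (p - 1)) ^ p ^ (r + 1 - 1) := by
        rw [← pow_mul]
        congr 1
        rw [← pow_succ]
        congr 1
        omega
      rw [← hpow]
      have hdecomp : P (p ^ (r + 1)) - ((1 - X ^ (p - 1)) ^ p ^ (r - 1)) ^ p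
          = (P (p ^ (r + 1)) - (P (p ^ r)) ^ p)
            + ((P (p ^ r)) ^ p - ((1 - X ^ (p - 1)) ^ p ^ (r - 1)) ^ p) := by ring
      rw [hdecomp]
      exact dvd_add hstep hlift

theorem stmt_0 (p : ℕ) (hp : p.Prime) (hodd : Odd p) (r : ℕ) (hr : 1 ≤ r) (i : ℕ) :
    (p : ℤ)^r ∣ (P (p^r) - (1 - Polynomial.X^(p-1))^(p^(r-1))).coeff i := by
  have h := main_cong p hp hodd r hr
  rw [← map_pow] at h
  exact (Polynomial.C_dvd_iff_dvd_coeff _ _).mp h i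
end

section
/- Let p be an odd prime and r ≥ 1. Then P_{p^r}(p·t) ≡ 1 (mod p^{r+1}), i.e., every coefficient of P_{p^r}(p·t) - 1 is divisible by p^{r+1}. -/
open Polynomial

lemma prodC {R : Type*} [CommRing R] {ι : Type*} (s : Finset ι) (a : R) (g : ι → R)
    (h : ∀ j ∈ s, a ∣ g j - 1) : a ∣ (∏ j ∈ s, g j) - 1 := by
  induction s using Finset.cons_induction with
  | empty => simp
  | cons i s hi ih =>
    rw [Finset.prod_cons]
    have h1 : a ∣ g i - 1 := h i (Finset.mem_cons_self i s)
    have h2 : a ∣ (∏ j ∈ s, g j) - 1 := ih fun j hj => h j (Finset.mem_cons_of_mem hj)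
    have heq : g i * ∏ j ∈ s, g j - 1
        = (g i - 1) * ∏ j ∈ s, g j + ((∏ j ∈ s, g j) - 1) := by ring
    rw [heq]
    exact dvd_add (h1.mul_right _) h2

lemma prodA {R : Type*} [CommRing R] {ι : Type*} (s : Finset ι) (a : R) (f : ι → R) :
    ∃ u, ∏ k ∈ s, (1 + a * f k) = 1 + a * ∑ k ∈ s, f k + a^2 * u := by
  induction s using Finset.cons_induction with
  | empty => exact ⟨0, by simp⟩
  | cons i s hi ih =>
    obtain ⟨u, hu⟩ := ih
    refine ⟨f i * (∑ k ∈ s, f k) + u + a * (f i * u), ?_⟩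
    rw [Finset.prod_cons, Finset.sum_cons, hu]; ring

lemma prodB {R : Type*} [CommRing R] {ι : Type*} (s : Finset ι) (a c : R) (g : ι → R)
    (h : ∀ j ∈ s, a ∣ g j - 1) :
    ∃ u v, ∏ j ∈ s, (g j + c)
      = ∏ j ∈ s, g j + c * (s.card : R) + c * a * u + c^2 * v := by
  induction s using Finset.cons_induction with
  | empty => exact ⟨0, 0, by simp⟩
  | cons i s hi ih =>
    obtain ⟨u, v, huv⟩ := ih fun j hj => h j (Finset.mem_cons_of_mem hj)
    obtain ⟨e, he⟩ := h i (Finset.mem_cons_self i s)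
    obtain ⟨w, hw⟩ := prodC s a g fun j hj => h j (Finset.mem_cons_of_mem hj)
    have he' : g i = 1 + a * e := by rw [← he]; ring
    have hw' : ∏ j ∈ s, g j = 1 + a * w := by rw [← hw]; ring
    refine ⟨e * (s.card : R) + g i * u + w, g i * v + (s.card : R) + a * u + c * v, ?_⟩
    rw [Finset.prod_cons, Finset.prod_cons, huv, Finset.card_cons]
    push_cast
    linear_combination (c * (s.card : R)) * he' + c * hw'

lemma key (p : ℕ) (hp : p.Prime) (hodd : Odd p) (r : ℕ) (hr : 1 ≤ r) :
    (C (p : ℤ))^(r+1) ∣ (∏ k ∈ Finset.range (p^r), (1 + C ((k : ℤ) * p) * X)) - 1 := by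
  induction r, hr using Nat.le_induction with
  | base =>
    obtain ⟨u, hu⟩ := prodA (Finset.range (p^1)) (C (p : ℤ)) (fun k => C (k : ℤ) * X)
    have hform : (∏ k ∈ Finset.range (p^1), ((1 : ℤ[X]) + C ((k : ℤ) * p) * X))
        = ∏ k ∈ Finset.range (p^1), (1 + C (p : ℤ) * (C (k : ℤ) * X)) := by
      refine Finset.prod_congr rfl fun k _ => ?_
      rw [map_mul]; ring
    rw [hform, hu]
    have hsum : (p : ℤ) ∣ ∑ k ∈ Finset.range (p^1), (k : ℤ) := by
      obtain ⟨m, hm⟩ := hodd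
      have h2 : (∑ k ∈ Finset.range p, k) * 2 = p * (p - 1) := Finset.sum_range_id_mul_two p
      have hpm : p - 1 = 2 * m := by omega
      rw [hpm] at h2
      have h2' : (∑ k ∈ Finset.range p, k) * 2 = (p * m) * 2 := by rw [h2]; ring
      have hS := Nat.eq_of_mul_eq_mul_right (by norm_num : 0 < 2) h2'
      have hcast : (∑ k ∈ Finset.range (p^1), (k : ℤ))
          = ((∑ k ∈ Finset.range p, k : ℕ) : ℤ) := by
        rw [pow_one]; push_cast; ring
      rw [hcast, hS]
      push_cast
      exact Dvd.intro _ rfl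
    obtain ⟨m, hm⟩ := hsum
    have hsum' : ∑ k ∈ Finset.range (p^1), (C (k : ℤ) * X : ℤ[X])
        = C (p : ℤ) * (C m * X) := by
      rw [← Finset.sum_mul, ← map_sum, hm, map_mul]; ring
    rw [hsum']
    exact ⟨C m * X + u, by ring⟩
  | succ r hr ih =>
    set cp : ℤ[X] := C (p : ℤ) with hcp
    set f : ℕ → ℤ[X] := fun k => 1 + C ((k : ℤ) * p) * X with hf
    set Q : ℤ[X] := ∏ k ∈ Finset.range (p^r), f k with hQ
    have hfd : ∀ j : ℕ, cp ∣ f j - 1 := by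
      intro j
      refine ⟨C (j : ℤ) * X, ?_⟩
      simp only [hf, hcp, map_mul]
      ring
    have claim : ∀ q : ℕ, cp^(r+2) ∣ (∏ k ∈ Finset.range (q * p^r), f k) - Q^q := by
      intro q
      induction q with
      | zero => simp
      | succ q ihq =>
        have hadd : (q+1) * p^r = q * p^r + p^r := by ring
        rw [hadd, Finset.prod_range_add]
        have hshift : ∀ j : ℕ, f (q * p^r + j) = f j + C ((q : ℤ) * (p:ℤ)^(r+1)) * X := by
          intro j
          simp only [hf]
          rw [add_assoc, add_right_inj, ← add_mul, ← map_add]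
          congr 1
          push_cast
          ring
        set c : ℤ[X] := C ((q : ℤ) * (p:ℤ)^(r+1)) * X with hc
        obtain ⟨u, v, huv⟩ := prodB (Finset.range (p^r)) cp c f (fun j _ => hfd j)
        have hB : ∏ j ∈ Finset.range (p^r), f (q * p^r + j)
            = Q + c * (((p^r : ℕ) : ℤ) : ℤ[X]) + c * cp * u + c^2 * v := by
          rw [show (∏ j ∈ Finset.range (p^r), f (q * p^r + j))
              = ∏ j ∈ Finset.range (p^r), (f j + c) from
            Finset.prod_congr rfl fun j _ => hshift j, huv]
          rw [Finset.card_range]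
          push_cast
          ring
        have hcfac : c = cp^(r+1) * (C (q : ℤ) * X) := by
          simp only [hc, hcp, map_mul, map_pow]
          ring
        have hnat : (((p^r : ℕ) : ℤ) : ℤ[X]) = cp^r := by
          rw [hcp, ← map_pow]
          norm_cast
        have hBQ : cp^(r+2) ∣ (∏ j ∈ Finset.range (p^r), f (q * p^r + j)) - Q := by
          rw [hB]
          have h1 : cp^(r+2) ∣ c * (((p^r : ℕ) : ℤ) : ℤ[X]) := by
            have he : c * (((p^r : ℕ) : ℤ) : ℤ[X]) = cp^(2*r+1) * (C (q : ℤ) * X) := by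
              rw [hcfac, hnat]; ring
            rw [he]
            exact (pow_dvd_pow cp (by omega)).mul_right _
          have h2 : cp^(r+2) ∣ c * cp * u := ⟨C (q : ℤ) * X * u, by rw [hcfac]; ring⟩
          have h3 : cp^(r+2) ∣ c^2 * v := by
            have he : c^2 * v = cp^(2*r+2) * ((C (q : ℤ) * X)^2 * v) := by
              rw [hcfac]; ring
            rw [he]
            exact (pow_dvd_pow cp (by omega)).mul_right _
          have hsplit : Q + c * (((p^r : ℕ) : ℤ) : ℤ[X]) + c * cp * u + c^2 * v - Q
              = c * (((p^r : ℕ) : ℤ) : ℤ[X]) + c * cp * u + c^2 * v := by ring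
          rw [hsplit]
          exact dvd_add (dvd_add h1 h2) h3
        have hsplit2 : (∏ k ∈ Finset.range (q * p^r), f k)
              * (∏ j ∈ Finset.range (p^r), f (q * p^r + j)) - Q^(q+1)
            = ((∏ k ∈ Finset.range (q * p^r), f k) - Q^q)
                * (∏ j ∈ Finset.range (p^r), f (q * p^r + j))
              + Q^q * ((∏ j ∈ Finset.range (p^r), f (q * p^r + j)) - Q) := by ring
        rw [hsplit2]
        exact dvd_add (ihq.mul_right _) (hBQ.mul_left _)
    -- Q^p is 1 mod p^(r+2)
    obtain ⟨A, hA⟩ := ih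
    obtain ⟨uu, huu⟩ := prodA (Finset.range p) (Q - 1) (fun _ => (1 : ℤ[X]))
    simp only [mul_one, Finset.prod_const, Finset.card_range, Finset.sum_const,
      nsmul_eq_mul] at huu
    have hQform : (1 + (Q - 1) : ℤ[X]) = Q := by ring
    rw [hQform] at huu
    have hnatp : ((p : ℕ) : ℤ[X]) = cp := by
      rw [hcp]
      simp
    have hp1 : cp^(r+2) ∣ Q^p - 1 := by
      refine ⟨A + cp^r * (A^2 * uu), ?_⟩
      rw [huu, hnatp, hA]
      ring
    show cp^(r+1+1) ∣ _
    rw [show p^(r+1) = p * p^r by rw [pow_succ]; ring,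
      ← sub_add_sub_cancel _ (Q^p) _]
    exact dvd_add (claim p) hp1

theorem stmt_2 (p : ℕ) (hp : p.Prime) (hodd : Odd p) (r : ℕ) (hr : 1 ≤ r) (i : ℕ) :
    (p : ℤ)^(r+1) ∣ ((P (p^r)).comp (Polynomial.C (p : ℤ) * Polynomial.X) - 1).coeff i := by
  have hcomp : (P (p^r)).comp (C (p : ℤ) * X)
      = ∏ k ∈ Finset.range (p^r), (1 + C ((k : ℤ) * p) * X) := by
    unfold P
    rw [Polynomial.prod_comp]
    refine Finset.prod_congr rfl fun k _ => ?_
    rw [add_comp, one_comp, mul_comp, C_comp, X_comp, map_mul]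
    ring
  have hk := key p hp hodd r hr
  rw [← hcomp] at hk
  have hC : C ((p : ℤ)^(r+1)) ∣ (P (p^r)).comp (C (p : ℤ) * X) - 1 := by
    rw [map_pow]; exact hk
  exact (Polynomial.C_dvd_iff_dvd_coeff _ _).mp hC i
end

section
/- Let n be a positive integer divisible by an odd prime p, and let r = v_p(n). If k is an integer with 0 ≤ k ≤ n such that p - 1 does not divide n - k, then the unsigned Stirling number of the first kind c(n, k) is congruent to 0 modulo p^r. -/
open Polynomial

lemma coeff_comp_C_mul_X {R : Type*} [CommRing R] (p : R[X]) (a : R) (i : ℕ) :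
    (p.comp (C a * X)).coeff i = a ^ i * p.coeff i := by
  induction p using Polynomial.induction_on' with
  | add p q hp hq => simp [add_comp, hp, hq, mul_add]
  | monomial e c =>
    rw [monomial_comp, mul_pow, ← C_pow, ← mul_assoc, ← C_mul, coeff_C_mul_X_pow,
      coeff_monomial]
    by_cases h : e = i
    · simp [h, mul_comm]
    · rw [if_neg h, if_neg (fun hie => h hie.symm), mul_zero]

lemma prod_range_cast {R : Type*} [CommMonoid R] (q : ℕ) [NeZero q] (f : ZMod q → R) :
    ∏ j ∈ Finset.range q, f (j : ZMod q) = ∏ x : ZMod q, f x := by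
  refine Finset.prod_bij (fun a _ => (a : ZMod q)) (fun a _ => Finset.mem_univ _) ?_ ?_ ?_
  · intro a ha b hb hab
    simpa [ZMod.val_cast_of_lt (Finset.mem_range.mp ha),
      ZMod.val_cast_of_lt (Finset.mem_range.mp hb)] using congrArg ZMod.val hab
  · intro x _
    exact ⟨x.val, Finset.mem_range.mpr (ZMod.val_lt x), ZMod.natCast_rightInverse x⟩
  · intros; rfl

lemma prod_range_mul_cast {R : Type*} [CommMonoid R] (q : ℕ) [NeZero q] (f : ZMod q → R) (m : ℕ) :
    ∏ j ∈ Finset.range (m * q), f (j : ZMod q) = (∏ x : ZMod q, f x) ^ m := by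
  induction m with
  | zero => simp
  | succ m ih =>
    rw [Nat.succ_mul, Finset.prod_range_add, ih, pow_succ]
    congr 1
    rw [← prod_range_cast q f]
    apply Finset.prod_congr rfl
    intro i _
    push_cast
    simp [ZMod.natCast_self]

lemma prod_univ_unit_mul {R : Type*} [CommMonoid R] (q : ℕ) [NeZero q] (f : ZMod q → R)
    (u : (ZMod q)ˣ) : ∏ x : ZMod q, f ((u : ZMod q) * x) = ∏ x : ZMod q, f x :=
  Fintype.prod_bijective (fun x => (u : ZMod q) * x) (Units.mulLeft_bijective u) _ _ (fun _ => rfl)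


theorem stmt_4 (p : ℕ) (hp : p.Prime) (hodd : Odd p) (n : ℕ) (hn : 0 < n) (hpn : p ∣ n)
    (r : ℕ) (hr : r = padicValNat p n) (k : ℕ) (hk : k ≤ n) (hdvd : ¬ (p - 1) ∣ (n - k)) :
    (p : ℤ)^r ∣ stirlingFirst n k := by
  haveI : Fact p.Prime := ⟨hp⟩
  have hr1 : 1 ≤ r := hr ▸ one_le_padicValNat_of_dvd hn.ne' hpn
  set q : ℕ := p ^ r with hq
  haveI : NeZero q := ⟨pow_ne_zero r hp.pos.ne'⟩
  have hqn : q ∣ n := by rw [hq, hr]; exact pow_padicValNat_dvd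
  obtain ⟨m, hm⟩ : ∃ m, n = m * q := ⟨n / q, (Nat.div_mul_cancel hqn).symm⟩
  -- a generator of (ZMod p)ˣ
  obtain ⟨g, hg⟩ := IsCyclic.exists_generator (α := (ZMod p)ˣ)
  have horder : orderOf g = p - 1 := by
    rw [orderOf_eq_card_of_forall_mem_zpowers hg, Nat.card_eq_fintype_card, ZMod.card_units]
  have hgpow : (g : ZMod p) ^ (n - k) ≠ 1 := by
    intro h
    apply hdvd
    rw [← horder]
    exact orderOf_dvd_iff_pow_eq_one.mpr (Units.ext (by simpa using h))
  set u0 : ℕ := (g : ZMod p).val with hu0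
  have hu0p : ((u0 : ℕ) : ZMod p) = (g : ZMod p) := ZMod.natCast_rightInverse _
  have hcop_p : Nat.Coprime u0 p := by
    rw [← ZMod.isUnit_iff_coprime, hu0p]
    exact g.isUnit
  have hcop : Nat.Coprime u0 q := hcop_p.pow_right r
  set u : (ZMod q)ˣ := ZMod.unitOfCoprime u0 hcop with hu
  have huval : (u : ZMod q) = (u0 : ZMod q) := rfl
  -- the mapped polynomial
  set φ := Int.castRingHom (ZMod q) with hφ
  set F : ZMod q → (ZMod q)[X] := fun x => 1 + C x * X with hF
  have step1 : (P n).map φ = ∏ j ∈ Finset.range n, F (j : ZMod q) := by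
    rw [P, Polynomial.map_prod]
    apply Finset.prod_congr rfl
    intro j _
    simp [hF]
  have step2 : (P n).map φ = (∏ x : ZMod q, F x) ^ m := by
    rw [step1, hm]
    exact prod_range_mul_cast q F m
  have step3 : ((P n).map φ).comp (C (u : ZMod q) * X) = (P n).map φ := by
    rw [step1, Polynomial.prod_comp]
    have key : ∀ j ∈ Finset.range n, (F (j : ZMod q)).comp (C (u : ZMod q) * X)
        = (fun x => F ((u : ZMod q) * x)) (j : ZMod q) := by
      intro j _
      simp only [hF, add_comp, one_comp, mul_comp, C_comp, X_comp, C_mul]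
      ring
    calc ∏ j ∈ Finset.range n, (F (j : ZMod q)).comp (C (u : ZMod q) * X)
        = ∏ j ∈ Finset.range n, (fun x => F ((u : ZMod q) * x)) (j : ZMod q) :=
          Finset.prod_congr rfl key
      _ = (∏ x : ZMod q, F ((u : ZMod q) * x)) ^ m := by
          rw [hm]; exact prod_range_mul_cast q (fun x => F ((u : ZMod q) * x)) m
      _ = (∏ x : ZMod q, F x) ^ m := by rw [prod_univ_unit_mul q F u]
      _ = ∏ j ∈ Finset.range n, F (j : ZMod q) := by
          rw [hm]; exact (prod_range_mul_cast q F m).symm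
  -- compare coefficients
  have hcoeff : (u : ZMod q) ^ (n - k) * ((P n).map φ).coeff (n - k)
      = ((P n).map φ).coeff (n - k) := by
    conv_rhs => rw [← step3]
    rw [coeff_comp_C_mul_X]
  have hmul : ((u : ZMod q) ^ (n - k) - 1) * ((P n).map φ).coeff (n - k) = 0 := by
    rw [sub_mul, one_mul, hcoeff, sub_self]
  -- the factor is a unit
  have hpq : p ∣ q := hq ▸ dvd_pow_self p (by omega)
  set ψ := ZMod.castHom hpq (ZMod p) with hψ
  have hψx : ψ ((u : ZMod q) ^ (n - k) - 1) ≠ 0 := by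
    rw [map_sub, map_pow, map_one, huval, map_natCast, hu0p]
    intro h
    exact hgpow (by rwa [sub_eq_zero] at h)
  have hunit : IsUnit ((u : ZMod q) ^ (n - k) - 1) := by
    set x : ZMod q := (u : ZMod q) ^ (n - k) - 1 with hx
    have hxval : ((x.val : ℕ) : ZMod q) = x := ZMod.natCast_rightInverse _
    rw [← hxval, ZMod.isUnit_iff_coprime]
    show x.val.Coprime (p ^ r)
    rw [Nat.coprime_pow_right_iff (by omega)]
    rw [Nat.coprime_comm, hp.coprime_iff_not_dvd]
    intro hdvd'
    apply hψx
    have h0 : ((x.val : ℕ) : ZMod p) = 0 := (ZMod.natCast_eq_zero_iff _ _).mpr hdvd'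
    calc ψ x = ψ ((x.val : ℕ) : ZMod q) := by rw [hxval]
    _ = ((x.val : ℕ) : ZMod p) := map_natCast ψ _
    _ = 0 := h0
  have hc0 : ((P n).map φ).coeff (n - k) = 0 := (hunit.mul_right_eq_zero).mp hmul
  have hfin : ((stirlingFirst n k : ℤ) : ZMod q) = 0 := by
    rw [stirlingFirst]
    have hmapc : ((((P n).coeff (n - k)) : ℤ) : ZMod q) = ((P n).map φ).coeff (n - k) := by
      rw [Polynomial.coeff_map]; rfl
    rw [hmapc, hc0]
  have hdq := (ZMod.intCast_zmod_eq_zero_iff_dvd _ q).mp hfin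
  rwa [hq, Nat.cast_pow] at hdq
end

section
/- For r ≥ 3, the polynomial P_{2^r}(t) = ∏_{k=0}^{2^r - 1} (1 + k·t) satisfies P_{2^r}(t) ≡ (1 - t^2)^{2^{r-2}} + 2^{r-1}(t + t^2 + t^{2^{r-1}+1} + t^{2^{r-1}+2}) (mod 2^r). -/
open Polynomial

noncomputable def A (r : ℕ) : Polynomial ℤ :=
  (1 - Polynomial.X^2)^(2^(r-2))
    + Polynomial.C ((2 : ℤ)^(r-1)) *
      (Polynomial.X + Polynomial.X^2 + Polynomial.X^(2^(r-1)+1) + Polynomial.X^(2^(r-1)+2))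



-- pairing lemma
lemma sum_pair2 {M : Type*} [AddCommMonoid M] (g : ℕ → M) (m : ℕ) :
    ∑ k ∈ Finset.range (2*m), g k = ∑ i ∈ Finset.range m, (g (2*i) + g (2*i+1)) := by
  induction m with
  | zero => simp
  | succ m ih =>
    have h : 2*(m+1) = (2*m) + 1 + 1 := by ring
    rw [h, Finset.sum_range_succ, Finset.sum_range_succ, ih, Finset.sum_range_succ, add_assoc]

-- first order expansion
lemma prod_add_expand {R : Type*} [CommRing R] (c : R) (s : Finset ℕ) (a b : ℕ → R) :
    ∃ E : R, ∏ k ∈ s, (a k + c * b k) =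
      ∏ k ∈ s, a k + c * (∑ k ∈ s, b k * ∏ j ∈ s.erase k, a j) + c^2 * E := by
  classical
  induction s using Finset.induction with
  | empty => exact ⟨0, by simp⟩
  | @insert i s hi ih =>
    obtain ⟨E, hE⟩ := ih
    refine ⟨E * (a i + c * b i) + b i * (∑ k ∈ s, b k * ∏ j ∈ s.erase k, a j), ?_⟩
    rw [Finset.prod_insert hi, hE, Finset.prod_insert hi, Finset.sum_insert hi,
      Finset.erase_insert hi]
    have h2 : ∀ k ∈ s, b k * ∏ j ∈ (insert i s).erase k, a j
        = a i * (b k * ∏ j ∈ s.erase k, a j) := by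
      intro k hk
      rw [Finset.erase_insert_of_ne (by rintro rfl; exact hi hk),
        Finset.prod_insert (by simp [hi, Finset.mem_erase])]
      ring
    rw [Finset.sum_congr rfl h2, ← Finset.mul_sum]
    ring


lemma dvdC (n : ℕ) [NeZero n] (p : Polynomial ℤ)
    (h : p.map (Int.castRingHom (ZMod n)) = 0) : C ((n : ℤ)) ∣ p := by
  rw [Polynomial.C_dvd_iff_dvd_coeff]
  intro i
  have h2 : ((p.coeff i : ℤ) : ZMod n) = 0 := by
    have := congrArg (fun q => Polynomial.coeff q i) h
    simpa using this
  exact_mod_cast (ZMod.intCast_zmod_eq_zero_iff_dvd _ _).mp h2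

lemma two_eq_zero_F : (2 : Polynomial (ZMod 2)) = 0 := by
  rw [← map_ofNat (Polynomial.C (R := ZMod 2)) 2, (by decide : (2 : ZMod 2) = 0), map_zero]

lemma factor_pow (j : ℕ) :
    (1 + Polynomial.C ((j : ℤ) : ZMod 2) * Polynomial.X) = (1 + Polynomial.X) ^ (j % 2) := by
  have hc : ((j : ℤ) : ZMod 2) = ((j % 2 : ℕ) : ZMod 2) := by
    rw [Int.cast_natCast, ZMod.natCast_mod]
  rw [hc]
  rcases Nat.mod_two_eq_zero_or_one j with h | h <;> rw [h] <;> simp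

lemma S_dvd (m : ℕ) (hm : Even m) :
    Polynomial.C (2 : ℤ) ∣ ∑ k ∈ Finset.range (2*m),
      ∏ j ∈ (Finset.range (2*m)).erase k, (1 + Polynomial.C (j : ℤ) * Polynomial.X) := by
  rcases Nat.eq_zero_or_pos m with rfl | hm1
  · simp
  rw [show ((2:ℤ)) = ((2:ℕ):ℤ) by norm_num]
  apply dvdC
  rw [Polynomial.map_sum]
  have hmap : ∀ k, (Polynomial.map (Int.castRingHom (ZMod 2))
      (∏ j ∈ (Finset.range (2*m)).erase k, (1 + Polynomial.C (j : ℤ) * Polynomial.X)))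
      = (1 + Polynomial.X) ^ (∑ j ∈ (Finset.range (2*m)).erase k, j % 2) := by
    intro k
    rw [Polynomial.map_prod]
    have hfac : ∀ j ∈ (Finset.range (2*m)).erase k,
        Polynomial.map (Int.castRingHom (ZMod 2)) (1 + Polynomial.C (j:ℤ) * Polynomial.X)
        = (1 + Polynomial.X) ^ (j % 2) := by
      intro j _
      simp only [Polynomial.map_add, Polynomial.map_one, Polynomial.map_mul, Polynomial.map_C,
        Polynomial.map_X]
      exact_mod_cast factor_pow j
    rw [Finset.prod_congr rfl hfac, Finset.prod_pow_eq_pow_sum]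
  simp only [hmap]
  -- exponents: e k + k % 2 = total
  set T := ∑ j ∈ Finset.range (2*m), j % 2 with hT
  have he : ∀ k ∈ Finset.range (2*m),
      (∑ j ∈ (Finset.range (2*m)).erase k, j % 2) + k % 2 = T := fun k hk =>
    Finset.sum_erase_add _ _ hk
  have hee : ∀ k ∈ Finset.range (2*m), ∀ k' ∈ Finset.range (2*m), k % 2 = k' % 2 →
      (∑ j ∈ (Finset.range (2*m)).erase k, j % 2) = ∑ j ∈ (Finset.range (2*m)).erase k', j % 2 := by
    intro k hk k' hk' hpar
    have := (he k hk).trans (he k' hk').symm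
    omega
  rw [sum_pair2]
  have key : ∀ i ∈ Finset.range m,
      ((1 + Polynomial.X : Polynomial (ZMod 2)) ^ (∑ j ∈ (Finset.range (2*m)).erase (2*i), j % 2)
       + (1 + Polynomial.X) ^ (∑ j ∈ (Finset.range (2*m)).erase (2*i+1), j % 2))
      = ((1 + Polynomial.X) ^ (∑ j ∈ (Finset.range (2*m)).erase 0, j % 2)
       + (1 + Polynomial.X) ^ (∑ j ∈ (Finset.range (2*m)).erase 1, j % 2)) := by
    intro i hi
    rw [Finset.mem_range] at hi
    have h0 : (0:ℕ) ∈ Finset.range (2*m) := by simp; omega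
    have h1 : (1:ℕ) ∈ Finset.range (2*m) := by simp; omega
    have h2i : 2*i ∈ Finset.range (2*m) := by simp; omega
    have h2i1 : 2*i+1 ∈ Finset.range (2*m) := by simp; omega
    rw [hee _ h2i _ h0 (by omega), hee _ h2i1 _ h1 (by omega)]
  rw [Finset.sum_congr rfl key, Finset.sum_const]
  obtain ⟨w, rfl⟩ := hm
  have : w + w = 2 * w := by ring
  simp only [this, Finset.card_range]
  rw [mul_comm, mul_nsmul, two_nsmul]
  have h2 : ∀ x : Polynomial (ZMod 2), x + x = 0 := fun x => by
    have := two_eq_zero_F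
    linear_combination x * this
  simp [h2]

lemma key_s8 (r : ℕ) (hr : 2 ≤ r) :
    Polynomial.C ((2:ℤ)^(r+1)) ∣ P (2^(r+1)) - (P (2^r))^2 := by
  set n := 2^r with hn
  have hsplit : P (2^(r+1)) = P n * ∏ k ∈ Finset.range n, (1 + Polynomial.C ((n + k : ℕ) : ℤ) * Polynomial.X) := by
    rw [P, P, show 2^(r+1) = n + n by rw [hn]; ring, Finset.prod_range_add]
  have hfac : ∀ k ∈ Finset.range n, (1 + Polynomial.C ((n + k : ℕ) : ℤ) * Polynomial.X)
      = ((1 + Polynomial.C (k : ℤ) * Polynomial.X) + Polynomial.C ((2:ℤ)^r) * Polynomial.X) := by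
    intro k _
    have : ((n + k : ℕ) : ℤ) = (k : ℤ) + (2:ℤ)^r := by push_cast [hn]; ring
    rw [this, Polynomial.C_add]
    ring
  obtain ⟨E, hE⟩ := prod_add_expand (Polynomial.C ((2:ℤ)^r)) (Finset.range n)
    (fun k => 1 + Polynomial.C (k : ℤ) * Polynomial.X) (fun _ => Polynomial.X)
  rw [hsplit, Finset.prod_congr rfl hfac, hE]
  obtain ⟨S₀, hS₀⟩ := S_dvd (2^(r-1)) (Nat.even_pow.mpr ⟨even_two, by omega⟩)
  have hnn : 2 * 2^(r-1) = n := by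
    rw [hn]
    conv_rhs => rw [show r = (r-1)+1 by omega]
    rw [pow_succ]; ring
  rw [hnn] at hS₀
  have hsum : (∑ k ∈ Finset.range n, Polynomial.X * ∏ j ∈ (Finset.range n).erase k,
      (1 + Polynomial.C (j : ℤ) * Polynomial.X)) = Polynomial.X * (Polynomial.C 2 * S₀) := by
    rw [← Finset.mul_sum, hS₀]
  rw [hsum]
  have hPn : (∏ k ∈ Finset.range n, (1 + Polynomial.C (k : ℤ) * Polynomial.X)) = P n := rfl
  rw [hPn]
  have expand : P n * (P n + Polynomial.C ((2:ℤ)^r) * (Polynomial.X * (Polynomial.C 2 * S₀))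
      + Polynomial.C ((2:ℤ)^r) ^ 2 * E) - P n ^ 2
      = Polynomial.C ((2:ℤ)^r) * Polynomial.C 2 * (P n * Polynomial.X * S₀)
        + Polynomial.C ((2:ℤ)^r) ^ 2 * (P n * E) := by ring
  rw [expand]
  apply dvd_add
  · rw [← Polynomial.C_mul, ← pow_succ]
    exact Dvd.intro _ rfl
  · rw [← Polynomial.C_pow, ← pow_mul]
    exact Dvd.dvd.mul_right (_root_.map_dvd Polynomial.C (pow_dvd_pow 2 (by omega))) _

lemma frob (s : ℕ) :
    ((1 - Polynomial.X^2 : Polynomial (ZMod 2)))^(2^s) = 1 + Polynomial.X^(2^(s+1)) := by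
  have h2 := two_eq_zero_F
  have h1 : (1 - Polynomial.X^2 : Polynomial (ZMod 2)) = (1 + Polynomial.X)^2 := by
    linear_combination (-Polynomial.X^2 - Polynomial.X : Polynomial (ZMod 2)) * h2
  rw [h1, ← pow_mul, show 2 * 2^s = 2^(s+1) by ring]
  have hfact : Fact (Nat.Prime 2) := ⟨Nat.prime_two⟩
  have := add_pow_char_pow (R := Polynomial (ZMod 2)) (p := 2) (n := s+1)
    (x := 1) (y := Polynomial.X)
  simpa using this

lemma astep (s : ℕ) (hs : 1 ≤ s) :
    Polynomial.C ((2:ℤ)^(s+3)) ∣ (A (s+2))^2 - A (s+3) := by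
  have hA1 : A (s+2) = (1 - Polynomial.X^2)^(2^s)
      + Polynomial.C ((2:ℤ)^(s+1)) *
        (Polynomial.X + Polynomial.X^2 + Polynomial.X^(2^(s+1)+1) + Polynomial.X^(2^(s+1)+2)) := by
    simp [A]
  have hA2 : A (s+3) = ((1 - Polynomial.X^2)^(2^s))^2
      + Polynomial.C ((2:ℤ)^(s+2)) *
        (Polynomial.X + Polynomial.X^2 + Polynomial.X^(2^(s+2)+1) + Polynomial.X^(2^(s+2)+2)) := by
    simp only [A, show s+3-2 = s+1 from rfl, show s+3-1 = s+2 from rfl, ← pow_mul,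
      show 2^s * 2 = 2^(s+1) by ring]
  set B := (1 - Polynomial.X^2 : Polynomial ℤ)^(2^s) with hB
  set C1 := (Polynomial.X + Polynomial.X^2 + Polynomial.X^(2^(s+1)+1) + Polynomial.X^(2^(s+1)+2) : Polynomial ℤ) with hC1
  set C2 := (Polynomial.X + Polynomial.X^2 + Polynomial.X^(2^(s+2)+1) + Polynomial.X^(2^(s+2)+2) : Polynomial ℤ) with hC2
  have hcc : Polynomial.C ((2:ℤ)^(s+2)) = 2 * Polynomial.C ((2:ℤ)^(s+1)) := by
    rw [show (2:ℤ)^(s+2) = 2 * (2:ℤ)^(s+1) by ring, Polynomial.C_mul, map_ofNat]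
  have hid : (A (s+2))^2 - A (s+3)
      = Polynomial.C ((2:ℤ)^(s+2)) * (B * C1 - C2) + Polynomial.C ((2:ℤ)^(s+1))^2 * C1^2 := by
    rw [hA1, hA2, hcc]; ring
  rw [hid]
  apply dvd_add
  · rw [show (2:ℤ)^(s+3) = (2:ℤ)^(s+2) * 2 by ring, Polynomial.C_mul]
    apply mul_dvd_mul_left
    rw [show ((2:ℤ)) = ((2:ℕ):ℤ) by norm_num]
    apply dvdC
    simp only [hB, hC1, hC2, Polynomial.map_sub, Polynomial.map_mul, Polynomial.map_add,
      Polynomial.map_pow, Polynomial.map_one, Polynomial.map_X]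
    rw [frob]
    have h2 := two_eq_zero_F
    have hM : 2^(s+2) = 2^(s+1) + 2^(s+1) := by ring
    simp only [hM, pow_add, pow_one, pow_succ]
    linear_combination (Polynomial.X^(2^(s+1)) * Polynomial.X
      + Polynomial.X^(2^(s+1)) * Polynomial.X^2 : Polynomial (ZMod 2)) * h2
  · rw [← Polynomial.C_pow, ← pow_mul]
    exact Dvd.dvd.mul_right (_root_.map_dvd Polynomial.C (pow_dvd_pow 2 (by omega))) _


lemma base_eq : P (2^3) - A 3 = Polynomial.C ((2:ℤ)^3) *
    (3*Polynomial.X + 40*Polynomial.X^2 + 245*Polynomial.X^3 + 846*Polynomial.X^4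
      + 1641*Polynomial.X^5 + 1633*Polynomial.X^6 + 630*Polynomial.X^7) := by
  simp only [P, A]
  norm_num [Finset.prod_range_succ, map_ofNat]
  ring

lemma Main : ∀ r : ℕ, 3 ≤ r → Polynomial.C ((2:ℤ)^r) ∣ P (2^r) - A r := by
  intro r hr
  induction r, hr using Nat.le_induction with
  | base => rw [base_eq]; exact Dvd.intro _ rfl
  | succ r hr IH =>
    have hsplit : P (2^(r+1)) - A (r+1)
        = (P (2^(r+1)) - (P (2^r))^2) + ((P (2^r))^2 - (A r)^2) + ((A r)^2 - A (r+1)) := by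
      ring
    rw [hsplit]
    apply dvd_add
    apply dvd_add
    · exact key_s8 r (by omega)
    · have h1 : (P (2^r))^2 - (A r)^2 = (P (2^r) - A r) * ((P (2^r) - A r) + 2 * A r) := by
        ring
      rw [h1, show (2:ℤ)^(r+1) = (2:ℤ)^r * 2 by ring, Polynomial.C_mul]
      apply mul_dvd_mul IH
      apply dvd_add
      · exact dvd_trans (by rw [map_ofNat]; exact _root_.map_dvd Polynomial.C (dvd_pow_self 2 (by omega))) IH
      · rw [map_ofNat]
        exact Dvd.intro _ rfl
    · have hs : r = (r - 2) + 2 := by omega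
      have h := astep (r-2) (by omega)
      rw [← hs, show r - 2 + 3 = r + 1 by omega] at h
      exact h

theorem stmt_8 (r : ℕ) (hr : 3 ≤ r) (i : ℕ) :
    (2 : ℤ)^r ∣ (P (2^r) - ((1 - Polynomial.X^2)^(2^(r-2))
      + Polynomial.C ((2 : ℤ)^(r-1)) *
        (Polynomial.X + Polynomial.X^2 + Polynomial.X^(2^(r-1)+1) + Polynomial.X^(2^(r-1)+2)))).coeff i := by
  have h := (Polynomial.C_dvd_iff_dvd_coeff _ _).mp (Main r hr) i
  exact h
end

section
/- For r ≥ 1, P_{2^r}(t) ≡ (1 - t^2)^{2^{r-2}} (mod 2^{r-1}) when r ≥ 2, i.e., every coefficient of the difference is divisible by 2^{r-1}. -/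
open Polynomial

lemma map_P (n m : ℕ) :
    (P m).map (Int.castRingHom (ZMod n)) =
      ∏ k ∈ Finset.range m, (1 + C ((k : ℕ) : ZMod n) * X) := by
  simp [P, Polynomial.map_prod]

lemma C_dvd_of_map_zero {n : ℕ} {p : Polynomial ℤ}
    (h : p.map (Int.castRingHom (ZMod n)) = 0) : C ((n : ℤ)) ∣ p := by
  rw [Polynomial.C_dvd_iff_dvd_coeff]
  intro i
  have := Polynomial.ext_iff.mp h i
  rw [Polynomial.coeff_map] at this
  simpa [ZMod.intCast_zmod_eq_zero_iff_dvd] using this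

lemma key_s10 (n : ℕ) : ∃ R : Polynomial ℤ, P (2*n) = (P n)^2 + C ((n:ℤ)) * R := by
  have h : C ((n:ℤ)) ∣ P (2*n) - (P n)^2 := by
    apply C_dvd_of_map_zero
    rw [Polynomial.map_sub, Polynomial.map_pow, map_P, map_P, sub_eq_zero]
    rw [two_mul, Finset.prod_range_add, sq]
    congr 1
    apply Finset.prod_congr rfl
    intro k _
    simp
  obtain ⟨R, hR⟩ := h
  exact ⟨R, by linear_combination hR⟩

lemma main (r : ℕ) (hr : 2 ≤ r) :
    ∃ Q : Polynomial ℤ, P (2^r) = (1 - X^2)^(2^(r-2)) + C ((2:ℤ)^(r-1)) * Q := by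
  induction r, hr using Nat.le_induction with
  | base =>
      refine ⟨C 3 * X + C 6 * X^2 + C 3 * X^3, ?_⟩
      have h4 : (2:ℕ)^2 = 4 := by norm_num
      rw [h4]
      norm_num [P, Finset.prod_range_succ]
      ring
  | succ r hr ih =>
      obtain ⟨Q, hQ⟩ := ih
      obtain ⟨R, hR⟩ := key_s10 (2^r)
      push_cast at hR
      have e1 : (2:ℕ)^(r+1) = 2 * 2^r := by ring
      have e2 : (r+1) - 2 = r - 1 := by omega
      have e3 : (r+1) - 1 = r := by omega
      have hA : ((1:Polynomial ℤ) - X^2)^(2^(r-1)) = (((1:Polynomial ℤ) - X^2)^(2^(r-2)))^2 := by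
        rw [← pow_mul]
        congr 1
        rw [← pow_succ]
        congr 1
        omega
      have h2 : (C (2:ℤ)) = 2 := by simp
      have q1 : (2:Polynomial ℤ) * 2^(r-1) = 2^r := by
        rw [← pow_succ']
        congr 1
        omega
      have q2 : (2:Polynomial ℤ)^(r-1) * 2^(r-1) = 2^r * 2^(r-2) := by
        rw [← pow_add, ← pow_add]
        congr 1
        omega
      refine ⟨(1 - X^2)^(2^(r-2)) * Q + C ((2:ℤ)^(r-2)) * Q^2 + R, ?_⟩
      rw [e1, e2, e3, hR, hQ, hA]
      simp only [map_pow, h2]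
      linear_combination ((1:Polynomial ℤ) - X^2)^(2^(r-2)) * Q * q1 + Q^2 * q2

theorem stmt_10 (r : ℕ) (hr : 2 ≤ r) (i : ℕ) :
    (2 : ℤ)^(r-1) ∣ (P (2^r) - (1 - Polynomial.X^2)^(2^(r-2))).coeff i := by
  obtain ⟨Q, hQ⟩ := main r hr
  rw [hQ, add_sub_cancel_left, Polynomial.coeff_C_mul]
  exact dvd_mul_right _ _
end

section
/- For r ≥ 2, P_{2^r}(t) ≡ P_{2^{r-1}}(t) · P_{2^{r-1}}(-t) · (1 - 2^{r-1}·t) (mod 2^r). -/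
open Polynomial

lemma P_map {R : Type*} [CommRing R] (n : ℕ) :
    (P n).map (Int.castRingHom R) =
      ∏ k ∈ Finset.range n, (1 + Polynomial.C (k : R) * Polynomial.X) := by
  rw [P, Polynomial.map_prod]
  refine Finset.prod_congr rfl fun k _ => ?_
  simp

theorem stmt_11 (r : ℕ) (hr : 2 ≤ r) (i : ℕ) :
    (2 : ℤ)^r ∣ (P (2^r) -
      P (2^(r-1)) * (P (2^(r-1))).comp (-Polynomial.X) *
        (1 - Polynomial.C ((2 : ℤ)^(r-1)) * Polynomial.X)).coeff i := by
  set m : ℕ := 2 ^ r with hm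
  set n : ℕ := 2 ^ (r - 1) with hn
  have hnn : n + n = m := by
    rw [hm, hn, ← two_mul, ← pow_succ']
    congr 1
    omega
  set R := ZMod m
  set f := Int.castRingHom R with hf
  have h2r : (2 : ℤ) ^ r = ((m : ℕ) : ℤ) := by push_cast [hm]; ring
  rw [h2r, ← ZMod.intCast_zmod_eq_zero_iff_dvd]
  have key : (P m).map f =
      ((P n).map f) * (((P n).comp (-Polynomial.X)).map f) *
        ((1 : R[X]) - Polynomial.C ((2 : R)^(r-1)) * Polynomial.X) := by
    have hcomp : ((P n).comp (-Polynomial.X)).map f =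
        ∏ k ∈ Finset.range n, (1 - Polynomial.C (k : R) * Polynomial.X) := by
      rw [Polynomial.map_comp, P_map, Polynomial.prod_comp]
      refine Finset.prod_congr rfl fun k _ => ?_
      simp [sub_eq_add_neg]
    have hm0 : ((m : ℕ) : R) = 0 := ZMod.natCast_self m
    have hshift : ∀ k ∈ Finset.range n,
        (1 + Polynomial.C ((n + k : ℕ) : R) * Polynomial.X) =
          (1 - Polynomial.C ((n - k : ℕ) : R) * Polynomial.X) := by
      intro k hk
      rw [Finset.mem_range] at hk
      have hcast : ((n + k : ℕ) : R) = -((n - k : ℕ) : R) := by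
        have h1 : (n + k) + (n - k) = m := by omega
        have h2 := congrArg (Nat.cast : ℕ → R) h1
        push_cast at h2
        rw [hm0] at h2
        push_cast
        linear_combination h2
      rw [hcast, map_neg]
      ring
    have hrefl : ∏ k ∈ Finset.range n,
        (1 - Polynomial.C ((n - k : ℕ) : R) * Polynomial.X) =
        ∏ k ∈ Finset.range n,
        (1 - Polynomial.C ((k + 1 : ℕ) : R) * Polynomial.X) := by
      rw [← Finset.prod_range_reflect (fun k =>
        (1 - Polynomial.C ((k + 1 : ℕ) : R) * Polynomial.X)) n]
      refine Finset.prod_congr rfl fun k hk => ?_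
      rw [Finset.mem_range] at hk
      have hn1 : 0 < n := Nat.two_pow_pos _
      have hx : n - 1 - k + 1 = n - k := by omega
      simp only [hx]
    have hsucc : ∏ k ∈ Finset.range n,
        (1 - Polynomial.C ((k + 1 : ℕ) : R) * Polynomial.X) =
        (∏ k ∈ Finset.range n, (1 - Polynomial.C ((k : ℕ) : R) * Polynomial.X)) *
          (1 - Polynomial.C ((n : ℕ) : R) * Polynomial.X) := by
      have h1 := Finset.prod_range_succ'
        (fun k => (1 - Polynomial.C ((k : ℕ) : R) * Polynomial.X)) n
      have h2 := Finset.prod_range_succ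
        (fun k => (1 - Polynomial.C ((k : ℕ) : R) * Polynomial.X)) n
      simp only [Nat.cast_zero, map_zero, zero_mul, sub_zero, mul_one] at h1
      rw [← h1, h2]
    have hnR : ((n : ℕ) : R) = (2 : R) ^ (r - 1) := by push_cast [hn]; ring
    calc (P m).map f
        = ∏ k ∈ Finset.range (n + n), (1 + Polynomial.C (k : R) * Polynomial.X) := by
          rw [P_map, hnn]
      _ = (∏ k ∈ Finset.range n, (1 + Polynomial.C (k : R) * Polynomial.X)) *
          ∏ k ∈ Finset.range n, (1 + Polynomial.C ((n + k : ℕ) : R) * Polynomial.X) := by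
          rw [Finset.prod_range_add]
      _ = ((P n).map f) * (((P n).comp (-Polynomial.X)).map f) *
          ((1 : R[X]) - Polynomial.C ((2 : R)^(r-1)) * Polynomial.X) := by
          rw [Finset.prod_congr rfl hshift, hrefl, hsucc, hcomp, P_map, hnR]
          ring
  have hmap : ((P m -
      P n * (P n).comp (-Polynomial.X) *
        (1 - Polynomial.C ((2 : ℤ)^(r-1)) * Polynomial.X)).map f).coeff i = 0 := by
    rw [Polynomial.map_sub, Polynomial.map_mul, Polynomial.map_mul]
    have hC : ((1 : ℤ[X]) - Polynomial.C ((2 : ℤ)^(r-1)) * Polynomial.X).map f =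
        (1 : R[X]) - Polynomial.C ((2 : R)^(r-1)) * Polynomial.X := by
      rw [Polynomial.map_sub, Polynomial.map_one, Polynomial.map_mul,
        Polynomial.map_C, Polynomial.map_X]
      congr 2
      rw [hf]
      congr 1
      rw [eq_intCast]
      push_cast
      ring
    rw [hC, key]
    simp
  rw [Polynomial.coeff_map] at hmap
  exact hmap
end

section
/- Let n be even with v_2(n) = 1. Then c(n, k) ≡ C(n/2, n-k) (mod 2) for 0 ≤ k ≤ n. -/
open Polynomial

lemma sum_mod_two (n : ℕ) : ∑ k ∈ Finset.range n, k % 2 = n / 2 := by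
  induction n with
  | zero => simp
  | succ m ih => rw [Finset.sum_range_succ, ih]; omega

lemma P_map_two (n : ℕ) :
    (P n).map (Int.castRingHom (ZMod 2)) = (Polynomial.X + 1) ^ (n / 2) := by
  rw [P, Polynomial.map_prod]
  have h : ∀ k ∈ Finset.range n,
      ((1 + Polynomial.C (k : ℤ) * Polynomial.X).map (Int.castRingHom (ZMod 2)))
        = (Polynomial.X + 1) ^ (k % 2) := by
    intro k _
    rcases Nat.mod_two_eq_zero_or_one k with h | h
    · have h2 : (k : ZMod 2) = 0 := by rw [← ZMod.natCast_mod, h]; simp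
      simp [h]
      rw [← map_natCast (Polynomial.C : ZMod 2 →+* _) k, h2, map_zero]
    · have h2 : (k : ZMod 2) = 1 := by rw [← ZMod.natCast_mod, h]; simp
      simp [h, add_comm]
      rw [← map_natCast (Polynomial.C : ZMod 2 →+* _) k, h2, map_one]
  rw [Finset.prod_congr rfl h, Finset.prod_pow_eq_pow_sum, sum_mod_two]

theorem stmt_13 (n : ℕ) (hn : 0 < n) (hr : padicValNat 2 n = 1) (k : ℕ) (hk : k ≤ n) :
    stirlingFirst n k ≡ (Nat.choose (n/2) (n-k) : ℤ) [ZMOD 2] := by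
  have key : ((stirlingFirst n k : ℤ) : ZMod 2)
      = (((Nat.choose (n/2) (n-k) : ℤ)) : ZMod 2) := ?_
  · exact_mod_cast (ZMod.intCast_eq_intCast_iff _ _ 2).mp key
  have : ((stirlingFirst n k : ℤ) : ZMod 2)
      = ((P n).map (Int.castRingHom (ZMod 2))).coeff (n - k) := by
    rw [stirlingFirst, Polynomial.coeff_map]; rfl
  rw [this, P_map_two, Polynomial.coeff_X_add_one_pow]
  norm_cast
end

section
/- Let n satisfy v_2(n) = 2. If n - k = 2ℓ then c(n,k) ≡ (-1)^ℓ C(n/4, ℓ) (mod 4), and if n - k = 2ℓ+1 then c(n,k) ≡ (-1)^ℓ C(n/4, ℓ)·(n/2) (mod 4). -/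
open Polynomial

lemma h4 : (4 : (ZMod 4)[X]) = 0 := by
  have h : ((4:ℕ) : (ZMod 4)[X]) = ((0:ℕ) : (ZMod 4)[X]) := by
    rw [← Polynomial.C_eq_natCast, ← Polynomial.C_eq_natCast]; norm_num; decide
  simpa using h

lemma key_s14 (m : ℕ) : (P (4*m)).map (Int.castRingHom (ZMod 4)) =
    ((1 - X^2) * (1 + Polynomial.C 2 * X))^m := by
  induction m with
  | zero => simp [P]
  | succ m ih =>
    have : 4*(m+1) = 4*m + 4 := by ring
    rw [this, P, Finset.prod_range_add, ← P, Polynomial.map_mul, ih]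
    have hmap : ∀ j : ℕ, ((1 + Polynomial.C ((j:ℤ)) * X).map (Int.castRingHom (ZMod 4)))
        = 1 + Polynomial.C ((j:ℕ):ZMod 4) * X := by
      intro j; simp
    rw [Polynomial.map_prod]
    have hb : ∀ i ∈ Finset.range 4,
        ((1 + Polynomial.C ((4*m+i : ℕ):ℤ) * X).map (Int.castRingHom (ZMod 4)))
        = 1 + Polynomial.C ((i:ℕ):ZMod 4) * X := by
      intro i _
      rw [hmap (4*m+i)]
      have : ((4*m+i : ℕ):ZMod 4) = ((i:ℕ):ZMod 4) := by
        push_cast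
        have z4 : (4:ZMod 4) = 0 := by decide
        linear_combination (m : ZMod 4) * z4
      rw [this]
    rw [Finset.prod_congr rfl hb]
    rw [pow_succ _ m]
    congr 1
    rw [Finset.prod_range_succ, Finset.prod_range_succ, Finset.prod_range_succ,
      Finset.prod_range_one]
    have e0 : ((0:ℕ):ZMod 4) = 0 := by decide
    have e1 : ((1:ℕ):ZMod 4) = 1 := by decide
    have e2 : ((2:ℕ):ZMod 4) = 2 := by decide
    have e3 : ((3:ℕ):ZMod 4) = 3 := by decide
    rw [e0, e1, e2, e3]
    have c2 : (Polynomial.C (2 : ZMod 4)) = 2 := by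
      rw [show (2:ZMod 4) = ((2:ℕ):ZMod 4) by decide, Polynomial.C_eq_natCast]; norm_num
    have c3 : (Polynomial.C (3 : ZMod 4)) = 3 := by
      rw [show (3:ZMod 4) = ((3:ℕ):ZMod 4) by decide, Polynomial.C_eq_natCast]; norm_num
    rw [Polynomial.C_0, Polynomial.C_1, c2, c3]
    linear_combination (X + 3*X^2 + 2*X^3) * h4

lemma two_pow (m : ℕ) : ((1 + Polynomial.C 2 * X : (ZMod 4)[X]))^m
    = 1 + Polynomial.C (2*(m:ZMod 4)) * X := by
  induction m with
  | zero => simp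
  | succ m ih =>
    rw [pow_succ, ih]
    push_cast
    simp only [map_mul, map_add, map_one]
    have c2 : (Polynomial.C (2 : ZMod 4)) = 2 := by
      rw [show (2:ZMod 4) = ((2:ℕ):ZMod 4) by decide, Polynomial.C_eq_natCast]; norm_num
    rw [c2]
    linear_combination (Polynomial.C ((m:ZMod 4)) * X^2) * h4

lemma expand (m : ℕ) : ((1 - X^2 : (ZMod 4)[X]))^m
    = ∑ j ∈ Finset.range (m+1),
        Polynomial.C ((-1)^j * (Nat.choose m j : ZMod 4)) * X^(2*j) := by
  rw [sub_eq_add_neg, add_comm, add_pow]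
  refine Finset.sum_congr rfl fun j hj => ?_
  rw [one_pow, mul_one, neg_pow, map_mul, map_pow, Polynomial.C_neg, Polynomial.C_1]
  rw [Polynomial.C_eq_natCast]
  ring

lemma coeff_sum_even (f : ℕ → ZMod 4) (N ℓ : ℕ) :
    (∑ j ∈ Finset.range N, Polynomial.C (f j) * X^(2*j)).coeff (2*ℓ)
    = if ℓ < N then f ℓ else 0 := by
  rw [Polynomial.finset_sum_coeff]
  simp only [Polynomial.coeff_C_mul, Polynomial.coeff_X_pow]
  have : ∀ j ∈ Finset.range N, f j * (if 2*ℓ = 2*j then (1:ZMod 4) else 0)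
      = if j = ℓ then f j else 0 := by
    intro j _
    by_cases h : j = ℓ <;> simp [h] <;> omega
  rw [Finset.sum_congr rfl this, Finset.sum_ite_eq' (Finset.range N) ℓ f]
  simp

lemma coeff_sum_odd (f : ℕ → ZMod 4) (N d : ℕ) (hd : Odd d) :
    (∑ j ∈ Finset.range N, Polynomial.C (f j) * X^(2*j)).coeff d = 0 := by
  rw [Polynomial.finset_sum_coeff]
  refine Finset.sum_eq_zero fun j _ => ?_
  simp only [Polynomial.coeff_C_mul, Polynomial.coeff_X_pow]
  obtain ⟨c, hc⟩ := hd
  rw [if_neg (by omega)]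
  simp

theorem stmt_14 (n : ℕ) (hn : 0 < n) (hr : padicValNat 2 n = 2) (k ℓ : ℕ) (hk : k ≤ n) :
    (n - k = 2*ℓ →
      stirlingFirst n k ≡ (-1)^ℓ * (Nat.choose (n/4) ℓ : ℤ) [ZMOD 4]) ∧
    (n - k = 2*ℓ + 1 →
      stirlingFirst n k ≡ (-1)^ℓ * (Nat.choose (n/4) ℓ : ℤ) * (n/2 : ℕ) [ZMOD 4]) := by
  haveI := Fact.mk Nat.prime_two
  -- extract n = 4 * m with m odd
  obtain ⟨m, hm, hodd⟩ : ∃ m, n = 4*m ∧ Odd m := by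
    have h2 : (2:ℕ)^2 ∣ n := by
      have := pow_padicValNat_dvd (p := 2) (n := n)
      rwa [hr] at this
    obtain ⟨m, hm⟩ := h2
    refine ⟨m, hm, ?_⟩
    rcases Nat.even_or_odd m with he | ho
    · exfalso
      obtain ⟨c, hc⟩ := he
      have h8 : (2:ℕ)^3 ∣ n := ⟨c, by omega⟩
      have := (padicValNat_dvd_iff_le (by omega)).mp h8
      omega
    · exact ho
  have hn4 : n/4 = m := by omega
  have hn2 : n/2 = 2*m := by omega
  have z4 : (4:ZMod 4) = 0 := by decide
  have hm2 : (2 : ZMod 4) * (m : ZMod 4) = 2 := by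
    obtain ⟨j, hj⟩ := hodd
    subst hj; push_cast
    linear_combination (j : ZMod 4) * z4
  set p : (ZMod 4)[X] := ∑ j ∈ Finset.range (m+1),
      Polynomial.C ((-1)^j * (Nat.choose m j : ZMod 4)) * X^(2*j) with hp
  have hP : (P n).map (Int.castRingHom (ZMod 4)) = p * (1 + Polynomial.C 2 * X) := by
    rw [hm, key_s14, mul_pow, two_pow, _root_.expand, ← hp, hm2]
  have hcoeff : ∀ d, (((P n).coeff d : ℤ) : ZMod 4) = (p * (1 + Polynomial.C 2 * X)).coeff d := by
    intro d
    rw [← hP, Polynomial.coeff_map]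
    rfl
  have hsplit : p * (1 + Polynomial.C 2 * X) = p + Polynomial.C 2 * (p * X) := by ring
  have p_even : ∀ j, p.coeff (2*j) = (-1)^j * (Nat.choose m j : ZMod 4) := by
    intro j
    rw [hp, coeff_sum_even]
    split
    · rfl
    · rw [Nat.choose_eq_zero_of_lt (by omega)]
      simp
  have p_odd : ∀ d, Odd d → p.coeff d = 0 := fun d hd => coeff_sum_odd _ _ _ hd
  have pX_even : ∀ j, (p * X).coeff (2*j) = 0 := by
    intro j
    cases j with
    | zero => simp [Polynomial.mul_coeff_zero]
    | succ j' =>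
      rw [show 2*(j'+1) = (2*j'+1)+1 by ring, Polynomial.coeff_mul_X]
      exact p_odd _ ⟨j', by ring⟩
  constructor
  · intro hd
    rw [hn4]
    refine (ZMod.intCast_eq_intCast_iff _ _ 4).mp ?_
    push_cast
    rw [show stirlingFirst n k = (P n).coeff (n - k) from rfl, hd, hcoeff, hsplit,
      Polynomial.coeff_add, Polynomial.coeff_C_mul, pX_even, p_even]
    ring
  · intro hd
    rw [hn4, hn2]
    refine (ZMod.intCast_eq_intCast_iff _ _ 4).mp ?_
    push_cast
    rw [show stirlingFirst n k = (P n).coeff (n - k) from rfl, hd, hcoeff, hsplit,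
      Polynomial.coeff_add, Polynomial.coeff_C_mul,
      show 2*ℓ+1 = (2*ℓ)+1 from rfl, Polynomial.coeff_mul_X,
      p_odd (2*ℓ+1) ⟨ℓ, by ring⟩, p_even]
    rw [hm2]
    ring
end

section
/- Let r ≥ 3 and suppose 2^r - k = 2ℓ + 1. If ℓ = 0 or ℓ = 2^{r-2}, then v_2(c(2^r, k)) = r - 1; otherwise 2^r divides c(2^r, k). -/
open Polynomial

theorem prodPair' {S : Type*} [CommRing S] (m : ℕ) (hm : 1 ≤ m) (hN : ((2*m : ℕ) : S) = 0) :
    ∏ j ∈ Finset.range (2*m), (1 + C (j:S) * X) =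
      (1 + C (m:S) * X) * Polynomial.expand S 2 (∏ j ∈ Finset.Ico 1 m, (1 - C ((j:S)^2) * X)) := by
  rw [Finset.range_eq_Ico, Finset.prod_eq_prod_Ico_succ_bot (by omega : 0 < 2*m)]
  rw [← Finset.prod_Ico_consecutive _ (by omega : 1 ≤ m) (by omega : m ≤ 2*m)]
  rw [Finset.prod_eq_prod_Ico_succ_bot (by omega : m < 2*m)]
  have key : ∏ j ∈ Finset.Ico (m+1) (2*m), (1 + C (j:S) * X)
      = ∏ j ∈ Finset.Ico 1 m, (1 + C ((2*m - j : ℕ):S) * X) := by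
    apply Finset.prod_nbij' (fun j => 2*m - j) (fun j => 2*m - j)
    · intro a ha; simp only [Finset.mem_Ico] at *; omega
    · intro a ha; simp only [Finset.mem_Ico] at *; omega
    · intro a ha; simp only [Finset.mem_Ico] at *; omega
    · intro a ha; simp only [Finset.mem_Ico] at *; omega
    · intro a ha
      have : 2*m - (2*m - a) = a := by simp only [Finset.mem_Ico] at ha; omega
      rw [this]
  rw [key]
  have e1 : (Polynomial.expand S 2) (∏ j ∈ Finset.Ico 1 m, (1 - C ((j:S)^2) * X))
      = ∏ j ∈ Finset.Ico 1 m, ((1 + C (j:S) * X) * (1 + C ((2*m - j : ℕ):S) * X)) := by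
    rw [map_prod]
    apply Finset.prod_congr rfl
    intro j hj
    simp only [Finset.mem_Ico] at hj
    have hc : ((2*m - j : ℕ) : S) = -(j:S) := by
      rw [Nat.cast_sub (by omega), hN]; ring
    rw [hc]
    simp only [map_sub, map_one, map_mul, map_neg, map_pow, Polynomial.expand_C, Polynomial.expand_X]
    ring
  rw [e1, Finset.prod_mul_distrib]
  simp only [Nat.cast_zero, map_zero, zero_mul, add_zero]
  ring

theorem prodZ2range' (n : ℕ) :
    ∏ j ∈ Finset.range (2*n), (1 - C ((j : ZMod 2)^2) * X) = (1 + X)^n := by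
  induction n with
  | zero => simp
  | succ n ih =>
    have h3 : 2*(n+1) = (2*n + 1) + 1 := by ring
    rw [h3, Finset.prod_range_succ, Finset.prod_range_succ, ih]
    have h1 : ((2*n : ℕ) : ZMod 2) = 0 := by
      rw [ZMod.natCast_eq_zero_iff]; exact ⟨n, rfl⟩
    have h2 : ((2*n + 1 : ℕ) : ZMod 2) = 1 := by push_cast [h1]; simp [h1]
    rw [h1, h2]
    simp only [map_one, map_zero, ne_eq, zero_pow, map_pow, one_pow, one_mul]
    ring_nf
    rw [CharTwo.neg_eq]

theorem prodZ2' (n : ℕ) (hn : 1 ≤ n) :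
    ∏ j ∈ Finset.Ico 1 (2*n), (1 - C ((j : ZMod 2)^2) * X) = (1 + X)^n := by
  have := prodZ2range' n
  rw [Finset.range_eq_Ico, Finset.prod_eq_prod_Ico_succ_bot (by omega : 0 < 2*n)] at this
  simpa using this

theorem mulEven' (r : ℕ) (hr : 1 ≤ r) (x : ZMod (2^r)) (h : 2 ∣ x.val) :
    ((2^(r-1) : ℕ) : ZMod (2^r)) * x = 0 := by
  haveI : NeZero (2^r) := ⟨(pow_pos (by norm_num : (0:ℕ) < 2) r).ne'⟩
  obtain ⟨t, ht⟩ := h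
  have hx : ((x.val : ℕ) : ZMod (2^r)) = x := by rw [ZMod.natCast_val, ZMod.cast_id]
  rw [← hx, ht, ← Nat.cast_mul]
  rw [ZMod.natCast_eq_zero_iff]
  refine ⟨t, ?_⟩
  have h2 : 2^(r-1) * 2 = 2^r := by rw [← pow_succ]; congr 1; omega
  calc 2^(r-1) * (2*t) = (2^(r-1) * 2) * t := by ring
  _ = 2^r * t := by rw [h2]

theorem mulOdd' (r : ℕ) (hr : 1 ≤ r) (x : ZMod (2^r)) (h : ¬ 2 ∣ x.val) :
    ((2^(r-1) : ℕ) : ZMod (2^r)) * x = ((2^(r-1) : ℕ) : ZMod (2^r)) := by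
  haveI : NeZero (2^r) := ⟨(pow_pos (by norm_num : (0:ℕ) < 2) r).ne'⟩
  obtain ⟨t, ht⟩ : ∃ t, x.val = 2*t + 1 := by
    rcases Nat.even_or_odd x.val with he | ho
    · exact absurd he.two_dvd h
    · obtain ⟨t, ht⟩ := ho; exact ⟨t, ht⟩
  have hx : ((x.val : ℕ) : ZMod (2^r)) = x := by rw [ZMod.natCast_val, ZMod.cast_id]
  rw [← hx, ht, ← Nat.cast_mul]
  have h2 : 2^(r-1) * 2 = 2^r := by rw [← pow_succ]; congr 1; omega
  have h4 : 2^(r-1) * (2*t+1) = 2^r * t + 2^(r-1) := by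
    calc 2^(r-1) * (2*t+1) = (2^(r-1)*2)*t + 2^(r-1) := by ring
    _ = 2^r * t + 2^(r-1) := by rw [h2]
  rw [h4, Nat.cast_add, Nat.cast_mul, ZMod.natCast_self, zero_mul, zero_add]

theorem stmt_16 (r : ℕ) (hr : 3 ≤ r) (k ℓ : ℕ) (hk : k ≤ 2^r)
    (h : 2^r - k = 2*ℓ + 1) :
    (ℓ = 0 ∨ ℓ = 2^(r-2) → padicValInt 2 (stirlingFirst (2^r) k) = r - 1) ∧
    (ℓ ≠ 0 ∧ ℓ ≠ 2^(r-2) → (2:ℤ)^r ∣ stirlingFirst (2^r) k) := by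
  haveI : NeZero (2^r) := ⟨(pow_pos (by norm_num : (0:ℕ) < 2) r).ne'⟩
  haveI : Fact (Nat.Prime 2) := ⟨Nat.prime_two⟩
  set c : ℤ := stirlingFirst (2^r) k with hc
  have hm : 2^r = 2 * 2^(r-1) := by rw [← pow_succ']; congr 1; omega
  set Q : Polynomial (ZMod (2^r)) :=
    ∏ j ∈ (Finset.Ico 1 (2^(r-1)) : Finset ℕ), (1 - C ((j:ZMod (2^r))^2) * X) with hQ
  have hp := prodPair' (S := ZMod (2^r)) (2^(r-1)) Nat.one_le_two_pow
    (by rw [← hm]; exact ZMod.natCast_self _)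
  rw [← hm] at hp
  have hmap : (P (2^r)).map (Int.castRingHom (ZMod (2^r)))
      = (1 + C ((2^(r-1):ℕ):ZMod (2^r)) * X) * Polynomial.expand (ZMod (2^r)) 2 Q := by
    unfold P
    rw [Polynomial.map_prod]
    have e : ∀ j ∈ Finset.range (2^r),
        (Polynomial.map (Int.castRingHom (ZMod (2^r))) (1 + C (j:ℤ) * X))
          = 1 + C ((j:ℕ):ZMod (2^r)) * X := by
      intro j _
      simp
    rw [Finset.prod_congr rfl e]
    exact hp
  have hcR : ((c : ℤ) : ZMod (2^r)) = ((2^(r-1):ℕ):ZMod (2^r)) * Q.coeff ℓ := by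
    have h1 : ((c:ℤ):ZMod (2^r)) = ((P (2^r)).map (Int.castRingHom (ZMod (2^r)))).coeff (2*ℓ+1) := by
      rw [Polynomial.coeff_map, hc]
      unfold stirlingFirst
      rw [h]
      rfl
    rw [h1, hmap, add_mul, one_mul, Polynomial.coeff_add,
      Polynomial.coeff_expand (by norm_num : 0 < 2), if_neg (by omega : ¬ 2 ∣ 2*ℓ+1),
      mul_assoc, Polynomial.coeff_C_mul, Polynomial.coeff_X_mul,
      Polynomial.coeff_expand (by norm_num : 0 < 2), if_pos ⟨ℓ, rfl⟩]
    have h5 : 2*ℓ/2 = ℓ := by omega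
    rw [h5, zero_add]
  have h2r : (2:ℕ) ∣ 2^r := dvd_pow_self 2 (by omega)
  set ψ : ZMod (2^r) →+* ZMod 2 := ZMod.castHom h2r (ZMod 2) with hψdef
  have hQ2 : Q.map ψ = 1 + X^(2^(r-2)) := by
    rw [hQ, Polynomial.map_prod]
    have e : ∀ j ∈ (Finset.Ico 1 (2^(r-1)) : Finset ℕ),
        ((1:Polynomial (ZMod (2^r))) - C ((j:ZMod (2^r))^2) * X).map ψ = 1 - C ((j:ZMod 2)^2) * X := by
      intro j _
      simp only [Polynomial.map_sub, Polynomial.map_one, Polynomial.map_mul, Polynomial.map_C,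
        Polynomial.map_X, Polynomial.map_pow, Polynomial.map_natCast, map_pow, map_natCast]
    rw [Finset.prod_congr rfl e]
    have hm2 : 2^(r-1) = 2 * 2^(r-2) := by rw [← pow_succ']; congr 1; omega
    rw [hm2, prodZ2' _ Nat.one_le_two_pow, add_pow_char_pow, one_pow]
  have hψcoeff : ψ (Q.coeff ℓ) = (1 + X^(2^(r-2)) : (ZMod 2)[X]).coeff ℓ := by
    rw [← hQ2, Polynomial.coeff_map]
  have hval : ψ (Q.coeff ℓ) = (((Q.coeff ℓ).val : ℕ) : ZMod 2) := by
    rw [hψdef, ZMod.castHom_apply, ← ZMod.natCast_val]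
  constructor
  · intro hl
    have hone : ψ (Q.coeff ℓ) = 1 := by
      rw [hψcoeff, Polynomial.coeff_add, Polynomial.coeff_one, Polynomial.coeff_X_pow]
      have h22 : (2:ℕ) ≤ 2^(r-2) := by
        calc (2:ℕ) = 2^1 := rfl
        _ ≤ 2^(r-2) := Nat.pow_le_pow_right (by norm_num) (by omega)
      rcases hl with rfl | rfl
      · rw [if_pos rfl, if_neg (by omega)]; ring
      · rw [if_neg (by omega), if_pos rfl]; ring
    have hodd : ¬ 2 ∣ (Q.coeff ℓ).val := by
      intro hdvd
      rw [hval] at hone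
      rw [(ZMod.natCast_eq_zero_iff _ _).mpr hdvd] at hone
      exact one_ne_zero hone.symm
    have hcR2 : ((c : ℤ) : ZMod (2^r)) = ((2^(r-1):ℕ):ZMod (2^r)) := by
      rw [hcR, mulOdd' r (by omega) _ hodd]
    have hd : ((2^r : ℕ) : ℤ) ∣ c - 2^(r-1) := by
      rw [← ZMod.intCast_zmod_eq_zero_iff_dvd]
      push_cast
      rw [hcR2]
      push_cast
      ring
    have hd' : (2:ℤ)^r ∣ c - 2^(r-1) := by push_cast at hd; exact hd
    have hdvd1 : (2:ℤ)^(r-1) ∣ c := by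
      have e : c = (c - 2^(r-1)) + 2^(r-1) := by ring
      rw [e]
      exact dvd_add (dvd_trans (pow_dvd_pow 2 (by omega)) hd') dvd_rfl
    have hndvd : ¬ (2:ℤ)^r ∣ c := by
      intro hcon
      have h6 : (2:ℤ)^r ∣ (2:ℤ)^(r-1) := by
        have e : (2:ℤ)^(r-1) = c - (c - 2^(r-1)) := by ring
        rw [e]
        exact dvd_sub hcon hd'
      have hle := Int.le_of_dvd (by positivity) h6
      have hlt : (2:ℤ)^(r-1) < 2^r := by
        have := pow_lt_pow_right₀ (by norm_num : (1:ℤ) < 2) (by omega : r-1 < r)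
        exact this
      omega
    have hc0 : c ≠ 0 := fun h0 => hndvd (h0 ▸ dvd_zero _)
    have hdvd1' : ((2:ℕ):ℤ)^(r-1) ∣ c := by exact_mod_cast hdvd1
    have ha := (padicValInt_dvd_iff (r-1) c).mp hdvd1'
    have hb : ¬ (r ≤ padicValInt 2 c) := by
      intro hge
      apply hndvd
      have := (padicValInt_dvd_iff r c).mpr (Or.inr hge)
      exact_mod_cast this
    rcases ha with h0 | hle1
    · exact absurd h0 hc0
    · omega
  · rintro ⟨h0, h1⟩
    have hzero : ψ (Q.coeff ℓ) = 0 := by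
      rw [hψcoeff, Polynomial.coeff_add, Polynomial.coeff_one, Polynomial.coeff_X_pow,
        if_neg h0, if_neg h1]
      ring
    have heven : 2 ∣ (Q.coeff ℓ).val := by
      rw [hval] at hzero
      exact (ZMod.natCast_eq_zero_iff _ _).mp hzero
    have hcR2 : ((c : ℤ) : ZMod (2^r)) = 0 := by
      rw [hcR, mulEven' r (by omega) _ heven]
    have hd : ((2^r : ℕ) : ℤ) ∣ c := (ZMod.intCast_zmod_eq_zero_iff_dvd _ _).mp hcR2
    push_cast at hd
    exact hd
end

section
/- Let A be a commutative ring, let ω ∈ A be a unit, and let n ≥ 1 with Φ_n(ω) = 0, where Φ_n is the n-th cyclotomic polynomial. Then for all a, b ∈ A, a^n - b^n = ∏_{i=0}^{n-1} (a - ω^i · b). -/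
open Polynomial Finset

theorem stmt_17 (A : Type*) [CommRing A] (ω : Aˣ) (n : ℕ) (hn : 1 ≤ n)
    (hΦ : (Polynomial.cyclotomic n A).eval (ω : A) = 0) (a b : A) :
    a^n - b^n = ∏ i ∈ Finset.range n, (a - (ω : A)^i * b) := by
  classical
  have hnpos : 0 < n := hn
  -- the universal ring `R = ℤ[X]/(Φ_n)`
  set Φ : Polynomial ℤ := Polynomial.cyclotomic n ℤ with hΦdef
  have hirr : Irreducible Φ := Polynomial.cyclotomic.irreducible hnpos
  let R := AdjoinRoot Φ
  haveI : IsDomain R := AdjoinRoot.isDomain_of_prime hirr.prime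
  let ζ : R := AdjoinRoot.root Φ
  have hroot : Polynomial.IsRoot (Polynomial.cyclotomic n R) ζ := by
    have := AdjoinRoot.isRoot_root Φ
    rwa [hΦdef, Polynomial.map_cyclotomic] at this
  haveI : NeZero (n : R) := by
    refine ⟨fun h0 => ?_⟩
    have hnZ : ((n : Polynomial ℤ)) ≠ 0 := Nat.cast_ne_zero.mpr (by omega)
    have : (AdjoinRoot.mk Φ) (n : Polynomial ℤ) = 0 := by
      rwa [map_natCast]
    have hdvd : Φ ∣ (n : Polynomial ℤ) := (AdjoinRoot.mk_eq_zero).mp this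
    have hdeg := Polynomial.natDegree_le_of_dvd hdvd hnZ
    rw [Polynomial.natDegree_natCast, hΦdef, Polynomial.natDegree_cyclotomic] at hdeg
    exact absurd hdeg (by simpa using (Nat.totient_pos.mpr hnpos).ne')
  haveI : NeZero n := ⟨by omega⟩
  have hζ : IsPrimitiveRoot ζ n := (Polynomial.isRoot_cyclotomic_iff).mp hroot
  -- the two-variable polynomial ring over `R`
  let U := MvPolynomial (Fin 2) R
  let ζU : U := MvPolynomial.C ζ
  have hζU : IsPrimitiveRoot ζU n :=
    hζ.map_of_injective (f := (MvPolynomial.C : R →+* U)) (MvPolynomial.C_injective _ _)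
  have key := IsPrimitiveRoot.pow_sub_pow_eq_prod_sub_mul (x := (MvPolynomial.X 0 : U)) (y := (MvPolynomial.X 1 : U)) hnpos hζU
  have hconv : ∏ μ ∈ nthRootsFinset n (1 : U), (MvPolynomial.X 0 - μ * MvPolynomial.X 1)
      = ∏ i ∈ Finset.range n, (MvPolynomial.X 0 - ζU ^ i * MvPolynomial.X (1 : Fin 2)) := by
    refine (Finset.prod_nbij (fun i => ζU ^ i) (fun i _ => ?_)
      (fun i hi j hj h => hζU.pow_inj (mem_range.mp hi) (mem_range.mp hj) h)
      (fun μ hμ => ?_) (fun _ _ => rfl)).symm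
    · exact (Polynomial.mem_nthRootsFinset hnpos (1 : U)).mpr
        (by rw [← pow_mul, mul_comm, pow_mul, hζU.pow_eq_one, one_pow])
    · obtain ⟨i, hi, he⟩ :=
        hζU.eq_pow_of_pow_eq_one ((Polynomial.mem_nthRootsFinset hnpos (1 : U)).mp hμ)
      exact ⟨i, mem_coe.mpr (mem_range.mpr hi), he⟩
  rw [hconv] at key
  -- the ring map `U → A`
  have hev : Polynomial.eval₂ (Int.castRingHom A) (ω : A) Φ = 0 := by
    rw [Polynomial.eval₂_eq_eval_map, hΦdef, Polynomial.map_cyclotomic]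
    exact hΦ
  let f : R →+* A := AdjoinRoot.lift (Int.castRingHom A) (ω : A) hev
  let g : U →+* A := MvPolynomial.eval₂Hom f ![a, b]
  have hfζ : f ζ = (ω : A) := AdjoinRoot.lift_root hev
  have hX0 : g (MvPolynomial.X 0) = a := MvPolynomial.eval₂Hom_X' f ![a, b] 0
  have hX1 : g (MvPolynomial.X 1) = b := MvPolynomial.eval₂Hom_X' f ![a, b] 1
  have hC : g ζU = (ω : A) := by
    rw [show g ζU = f ζ from MvPolynomial.eval₂Hom_C f ![a, b] ζ, hfζ]
  have hg := congrArg g key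
  simp only [map_sub, map_pow, map_prod, map_mul, hX0, hX1, hC] at hg
  exact hg
end
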